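/- With φ the Fox function, for every even l and every k with 2k ≥ l, φ(l+1,2k+1) = -φ(l,2k+1). -/
import Mathlib


theorem stmt (φ : ℕ → ℕ → ℤ)
    (h0 : ∀ k : ℕ, φ 0 k = 1)
    (hdiag : ∀ k : ℕ, φ k k = (-1 : ℤ) ^ k)
    (hrec : ∀ l k : ℕ, 0 < l → l < k →
      φ l k = (-1 : ℤ) ^ (k - l + 1) * φ (l - 1) (k - 1) + φ l (k - 1)) :
    ∀ l k : ℕ, Even l → l ≤ 2 * k → φ (l + 1) (2 * k + 1) = -φ l (2 * k + 1) := by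
  have pe : ∀ m : ℕ, (-1:ℤ)^(2*m) = 1 := fun m => by simp [pow_mul]
  have po : ∀ m : ℕ, (-1:ℤ)^(2*m+1) = -1 := fun m => by simp [pow_succ, pow_mul]
  intro l k
  induction k generalizing l with
  | zero =>
    intro hl hle
    have hl0 : l = 0 := by omega
    subst hl0
    rw [h0, hdiag]
    norm_num
  | succ k ih =>
    intro hl hle
    obtain ⟨j, hj⟩ := hl
    subst hj
    rcases Nat.lt_or_ge j 1 with hj0 | hj1
    · -- j = 0, l = 0
      have hj' : j = 0 := by omega
      subst hj'
      have e1 := hrec 1 (2*(k+1)+1) (by omega) (by omega)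
      have e2 := hrec 1 (2*(k+1)) (by omega) (by omega)
      have e3 := ih 0 Even.zero (by omega)
      rw [show 2*(k+1)+1-1 = 2*(k+1) from by omega] at e1
      rw [po (k+1)] at e1
      rw [show 2*(k+1)-1 = 2*k+1 from by omega] at e2
      rw [show 2*k+1+1 = 2*(k+1) from by omega, pe (k+1)] at e2
      simp only [show (1:ℕ)-1 = 0 from rfl, h0] at e1 e2
      rw [show (0:ℕ)+0+1 = 1 from rfl, show (0:ℕ)+0 = 0 from rfl, h0]
      rw [show (0:ℕ)+1 = 1 from rfl, h0] at e3
      linarith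
    · rcases Nat.lt_or_ge (j + j) (2*(k+1)) with hlt | hge
      · -- 2 ≤ l = 2j ≤ 2k, middle case
        have hle' : j + j ≤ 2*k := by omega
        have h1 := hrec (j+j+1) (2*(k+1)+1) (by omega) (by omega)
        have h2 := hrec (j+j) (2*(k+1)+1) (by omega) (by omega)
        have h3 := hrec (j+j+1) (2*(k+1)) (by omega) (by omega)
        have h4 := hrec (j+j-1) (2*(k+1)) (by omega) (by omega)
        have ihl := ih (j+j) ⟨j, rfl⟩ hle'
        have ihl2 := ih (j-1+(j-1)) ⟨j-1, rfl⟩ (by omega)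
        rw [show j-1+(j-1)+1 = j+j-1 from by omega,
            show j-1+(j-1) = j+j-2 from by omega] at ihl2
        rw [show 2*(k+1)+1-(j+j+1)+1 = 2*(k+1-j)+1 from by omega, po,
            show j+j+1-1 = j+j from by omega,
            show 2*(k+1)+1-1 = 2*(k+1) from by omega] at h1
        rw [show 2*(k+1)+1-(j+j)+1 = 2*(k+2-j) from by omega, pe,
            show 2*(k+1)+1-1 = 2*(k+1) from by omega] at h2
        rw [show 2*(k+1)-(j+j+1)+1 = 2*(k+1-j) from by omega, pe,
            show j+j+1-1 = j+j from by omega,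
            show 2*(k+1)-1 = 2*k+1 from by omega] at h3
        rw [show 2*(k+1)-(j+j-1)+1 = 2*(k+2-j) from by omega, pe,
            show j+j-1-1 = j+j-2 from by omega,
            show 2*(k+1)-1 = 2*k+1 from by omega] at h4
        linarith
      · -- l = 2k+2, top case
        have hl2 : j + j = 2*(k+1) := by omega
        rw [hl2]
        have hd1 : φ (2*(k+1)+1) (2*(k+1)+1) = -1 := by rw [hdiag, po]
        have hd2 : φ (2*(k+1)) (2*(k+1)) = 1 := by rw [hdiag, pe]
        have hd3 : φ (2*k+1) (2*k+1) = -1 := by rw [hdiag, po]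
        have h2 := hrec (2*(k+1)) (2*(k+1)+1) (by omega) (by omega)
        have h3 := hrec (2*k+1) (2*(k+1)) (by omega) (by omega)
        have ihk := ih (2*k) ⟨k, by ring⟩ (by omega)
        rw [show 2*(k+1)+1-2*(k+1)+1 = 2*1 from by omega, pe,
            show 2*(k+1)+1-1 = 2*(k+1) from by omega,
            show 2*(k+1)-1 = 2*k+1 from by omega] at h2
        rw [show 2*(k+1)-(2*k+1)+1 = 2*1 from by omega, pe,
            show 2*k+1-1 = 2*k from by omega,
            show 2*(k+1)-1 = 2*k+1 from by omega] at h3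
        linarith
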